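/- Let m ≥ 1 be an integer. Let S be the set of vectors c = (c₁, …, c_m) ∈ ℚ^m satisfying: (i) c₁ ≥ c₂ ≥ ⋯ ≥ c_m ≥ 0; (ii) c₁ + ⋯ + c_m ≤ 1; (iii) for each 1 ≤ j ≤ m−1, if c_j > c_{j+1} then c₁ + ⋯ + c_j is an integer; (iv) if c_m > 0 then c₁ + ⋯ + c_m = 1. Then S = {0} ∪ {b_j : 1 ≤ j ≤ m}, where b_j ∈ ℚ^m is the vector whose first j coordinates equal 1/j and whose remaining coordinates are 0. In particular S has exactly m + 1 elements. -/

import Mathlib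

open Finset

/-- The vector `b_j ∈ ℚ^m` whose first `j` coordinates are `1/j` and whose
remaining coordinates are `0`.  (For `j = 0` this is the zero vector.) -/
def bvec (m j : ℕ) : Fin m → ℚ := fun i => if i.val < j then (j : ℚ)⁻¹ else 0

/-- The set of vectors `c ∈ ℚ^m` satisfying the Kottwitz conditions for
`B(SO(V)_{ℚ_p}, μ)`, `dim V = 2m + 1`:
(i) `c₁ ≥ c₂ ≥ ⋯ ≥ c_m ≥ 0`; (ii) `c₁ + ⋯ + c_m ≤ 1`;
(iii) if `c_j > c_{j+1}` (`1 ≤ j ≤ m - 1`) then `c₁ + ⋯ + c_j ∈ ℤ`;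
(iv) if `c_m > 0` then `c₁ + ⋯ + c_m = 1`. -/
def oddSONewtonSet (m : ℕ) (hm : 1 ≤ m) : Set (Fin m → ℚ) :=
  {c | (∀ i j : Fin m, i ≤ j → c j ≤ c i) ∧
       (∀ i, 0 ≤ c i) ∧
       (∑ i, c i) ≤ 1 ∧
       (∀ i : Fin m, ∀ h : i.val + 1 < m, c ⟨i.val + 1, h⟩ < c i →
          ∃ z : ℤ, (∑ j : Fin m, if j.val ≤ i.val then c j else 0) = (z : ℚ)) ∧
       (0 < c ⟨m - 1, by omega⟩ → (∑ i, c i) = 1)}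

/-!
Let `c` satisfy the conditions. At a drop `c_i > c_{i+1}` the partial sum `c₁ + ⋯ + c_i` is an
integer, positive because `c_i > 0` and at most `1`, hence equal to `1`; so everything after a drop
vanishes. Thus `c` is constant on its support `{1, …, j}`, and the total sum is `1`: either by the
drop at `j`, or by condition (iv) when `j = m`. Hence `c = b_j`, or `c = 0` when `j = 0`.
-/

variable {m : ℕ}

lemma sum_ite_val_le_eq_sum_Iic {M : Type*} [AddCommMonoid M] (c : Fin m → M) (i : Fin m) :
    (∑ k : Fin m, if k.val ≤ i.val then c k else 0) = ∑ k ∈ Iic i, c k := by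
  simp_rw [← Fin.le_def]
  rw [← sum_filter, filter_ge_eq_Iic]

lemma sum_Iic_eq_sum_of_forall_lt {M : Type*} [AddCommMonoid M] {c : Fin m → M} {i : Fin m}
    (h : ∀ k, i < k → c k = 0) : ∑ k ∈ Iic i, c k = ∑ k, c k :=
  sum_subset (subset_univ _) fun k _ hk => h k (not_le.mp (mem_Iic.not.mp hk))

lemma sum_ite_val_lt_const {R : Type*} [NonAssocSemiring R] {j : ℕ} (hj : j ≤ m) (x : R) :
    (∑ i : Fin m, if i.val < j then x else 0) = j * x := by
  rw [← sum_filter, sum_const, Fin.card_filter_val_lt, min_eq_right hj, nsmul_eq_mul]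

lemma bvec_zero (m : ℕ) : bvec m 0 = 0 := by
  ext
  simp [bvec]

lemma bvec_nonneg (m j : ℕ) (i : Fin m) : 0 ≤ bvec m j i := by
  unfold bvec
  split <;> positivity

lemma bvec_antitone (m j : ℕ) : Antitone (bvec m j) := by
  intro i k hik
  unfold bvec
  split_ifs with hk hi hi
  · rfl
  · exact absurd (lt_of_le_of_lt (Fin.le_def.mp hik) hk) hi
  · positivity
  · rfl

lemma sum_bvec {j : ℕ} (hj0 : j ≠ 0) (hjm : j ≤ m) : ∑ i, bvec m j i = 1 := by
  simp only [bvec]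
  rw [sum_ite_val_lt_const hjm, mul_inv_cancel₀ (Nat.cast_ne_zero.mpr hj0)]

lemma bvec_injOn (m : ℕ) : Set.InjOn (bvec m) (Set.Iic m) := by
  intro j hj k hk h
  by_contra hne
  wlog hjk : j < k generalizing j k
  · exact this hk hj h.symm (Ne.symm hne) (by omega)
  have hk' : k - 1 < m := by simp only [Set.mem_Iic] at hk; omega
  have := congrFun h ⟨k - 1, hk'⟩
  simp only [bvec] at this
  rw [if_neg (by omega), if_pos (by omega)] at this
  exact inv_ne_zero (Nat.cast_ne_zero.mpr (by omega)) this.symm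

lemma bvec_mem_oddSONewtonSet (hm : 1 ≤ m) {j : ℕ} (hj : j ≤ m) :
    bvec m j ∈ oddSONewtonSet m hm := by
  rcases Nat.eq_zero_or_pos j with rfl | hj0
  · rw [bvec_zero]
    exact ⟨fun _ _ _ => le_rfl, fun _ => le_rfl, by simp, fun _ _ h => absurd h (lt_irrefl _),
      fun h => absurd h (lt_irrefl _)⟩
  have hsum := sum_bvec hj0.ne' hj
  refine ⟨bvec_antitone m j, bvec_nonneg m j, hsum.le, fun i _ hdrop => ⟨1, ?_⟩,
    fun _ => hsum⟩
  have hij : i.val + 1 = j := by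
    simp only [bvec] at hdrop
    split_ifs at hdrop with h₁ h₂
    · exact absurd hdrop (lt_irrefl _)
    · omega
    · omega
    · exact absurd hdrop (lt_irrefl _)
  rw [sum_ite_val_le_eq_sum_Iic, sum_Iic_eq_sum_of_forall_lt, hsum, Int.cast_one]
  intro k hk
  simp only [bvec, Fin.lt_def] at hk ⊢
  rw [if_neg (by omega)]

section Characterization

variable {hm : 1 ≤ m} {c : Fin m → ℚ}

lemma sum_Iic_eq_one_of_drop (hc : c ∈ oddSONewtonSet m hm) {i : Fin m} (hi : i.val + 1 < m)
    (hdrop : c ⟨i.val + 1, hi⟩ < c i) : ∑ k ∈ Iic i, c k = 1 := by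
  obtain ⟨-, hnn, hsum, hint, -⟩ := hc
  obtain ⟨z, hz⟩ := hint i hi hdrop
  rw [sum_ite_val_le_eq_sum_Iic] at hz
  have hpos : (0 : ℚ) < z := hz ▸ (lt_of_le_of_lt (hnn _) hdrop).trans_le
    (single_le_sum (fun k _ => hnn k) (mem_Iic.mpr le_rfl))
  have hle : (z : ℚ) ≤ 1 := hz ▸ (sum_le_sum_of_subset_of_nonneg (subset_univ _)
    fun k _ _ => hnn k).trans hsum
  have hz1 : z = 1 := by
    have : 0 < z := by exact_mod_cast hpos
    have : z ≤ 1 := by exact_mod_cast hle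
    omega
  rw [hz, hz1, Int.cast_one]

lemma apply_succ_eq_of_pos (hc : c ∈ oddSONewtonSet m hm) {i : Fin m} (hi : i.val + 1 < m)
    (hpos : 0 < c ⟨i.val + 1, hi⟩) : c ⟨i.val + 1, hi⟩ = c i := by
  refine le_antisymm (hc.1 _ _ (Fin.le_def.mpr (Nat.le_succ _))) (not_lt.mp fun hdrop => ?_)
  have hlt : ∑ k ∈ Iic i, c k < ∑ k, c k :=
    sum_lt_sum_of_subset (subset_univ _) (mem_univ _) (by simp [Fin.le_def]) hpos
      fun k _ _ => hc.2.1 k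
  linarith [sum_Iic_eq_one_of_drop hc hi hdrop, hc.2.2.1]

lemma apply_eq_apply_zero_of_pos (hc : c ∈ oddSONewtonSet m hm) :
    ∀ (k : ℕ) (hk : k < m), 0 < c ⟨k, hk⟩ → c ⟨k, hk⟩ = c ⟨0, by omega⟩
  | 0, _, _ => rfl
  | k + 1, hk, hpos => (apply_succ_eq_of_pos hc (i := ⟨k, by omega⟩) hk hpos).trans <|
      apply_eq_apply_zero_of_pos hc k _ (hpos.trans_le (hc.1 _ _ (Fin.le_def.mpr (by simp))))

lemma sum_eq_one_of_pos_iff (hc : c ∈ oddSONewtonSet m hm) {j : ℕ} (hj0 : 0 < j) (hjm : j ≤ m)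
    (hsupp : ∀ i : Fin m, 0 < c i ↔ i.val < j) : ∑ i, c i = 1 := by
  have hzero : ∀ i : Fin m, j ≤ i.val → c i = 0 := fun i hi =>
    le_antisymm (not_lt.mp fun h => by have := (hsupp i).mp h; omega) (hc.2.1 i)
  let i₀ : Fin m := ⟨j - 1, by omega⟩
  have hpos : 0 < c i₀ := (hsupp i₀).mpr (by simp only [i₀]; omega)
  rcases hjm.lt_or_eq with hjm | rfl
  · have hnext : c ⟨i₀.val + 1, by simp only [i₀]; omega⟩ = 0 :=
      hzero _ (by simp only [i₀]; omega)
    rw [← sum_Iic_eq_sum_of_forall_lt (i := i₀) fun k hk =>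
      hzero k (by simp only [Fin.lt_def, i₀] at hk; omega)]
    exact sum_Iic_eq_one_of_drop hc _ (hnext ▸ hpos)
  · exact hc.2.2.2.2 hpos

lemma eq_bvec_of_mem_oddSONewtonSet (hc : c ∈ oddSONewtonSet m hm) :
    ∃ j ≤ m, c = bvec m j := by
  set j := #{i | 0 < c i}
  have hsupp : ∀ i : Fin m, 0 < c i ↔ i.val < j := fun i =>
    (Fin.lt_card_filter_univ_iff_apply_of_imp (fun i => 0 < c i) fun _ _ hki hi =>
      hi.trans_le (hc.1 _ _ hki)).symm
  have hjm : j ≤ m := (card_le_univ _).trans_eq (Fintype.card_fin m)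
  have hzero : ∀ i : Fin m, ¬ i.val < j → c i = 0 := fun i hi =>
    le_antisymm (not_lt.mp (mt (hsupp i).mp hi)) (hc.2.1 i)
  refine ⟨j, hjm, ?_⟩
  rcases Nat.eq_zero_or_pos j with hj0 | hj0
  · rw [hj0, bvec_zero]
    exact funext fun i => hzero i (by omega)
  have hconst : c = fun i => if i.val < j then c ⟨0, by omega⟩ else 0 := by
    ext i
    split_ifs with hi
    · exact apply_eq_apply_zero_of_pos hc i i.isLt ((hsupp i).mpr hi)
    · exact hzero i hi
  have hc0 : c ⟨0, by omega⟩ = (j : ℚ)⁻¹ := by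
    have hsum := sum_eq_one_of_pos_iff hc hj0 hjm hsupp
    rw [hconst, sum_ite_val_lt_const hjm] at hsum
    exact eq_inv_of_mul_eq_one_right hsum
  rw [hconst, hc0]
  rfl

end Characterization

/-- The Kottwitz set is exactly `{0} ∪ {b_j : 1 ≤ j ≤ m}`, and has `m + 1` elements. -/
theorem oddSONewtonSet_eq (m : ℕ) (hm : 1 ≤ m) :
    oddSONewtonSet m hm
      = {0} ∪ {v | ∃ j : ℕ, 1 ≤ j ∧ j ≤ m ∧ v = bvec m j} ∧
    (oddSONewtonSet m hm).ncard = m + 1 := by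
  have himage : oddSONewtonSet m hm = bvec m '' Set.Iic m := by
    ext c
    refine ⟨fun hc => ?_, ?_⟩
    · obtain ⟨j, hj, rfl⟩ := eq_bvec_of_mem_oddSONewtonSet hc
      exact ⟨j, hj, rfl⟩
    · rintro ⟨j, hj, rfl⟩
      exact bvec_mem_oddSONewtonSet hm hj
  refine ⟨?_, ?_⟩
  · rw [himage]
    ext v
    simp only [Set.mem_image, Set.mem_Iic, Set.mem_union, Set.mem_singleton_iff, Set.mem_ofPred_eq]
    constructor
    · rintro ⟨j, hj, rfl⟩
      rcases Nat.eq_zero_or_pos j with rfl | hj0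
      · exact .inl (bvec_zero m)
      · exact .inr ⟨j, hj0, hj, rfl⟩
    · rintro (rfl | ⟨j, -, hj, rfl⟩)
      · exact ⟨0, Nat.zero_le m, bvec_zero m⟩
      · exact ⟨j, hj, rfl⟩
  · rw [himage, (bvec_injOn m).ncard_image, ← coe_Iic, Set.ncard_coe_finset,
      Nat.card_Iic]
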